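/- arXiv:1902.06582 — 3 statements merged into one kernel-verified Lean document; each statement's English description precedes it below -/
import Mathlib

section
/- Let k be an arbitrary field and let A = A'⊕A'', B = B'⊕B'', C = C'⊕C'' be finite-dimensional k-vector spaces. Let p' ∈ A'⊗B'⊗C' be any tensor and let p'' ∈ A''⊗B''⊗C'' be a tensor that is A''-concise and satisfies R(p'') ≤ dim A'' + 2. Then the additivity of the tensor rank holds: R(p'⊕p'') = R(p') + R(p''). -/
open TensorProduct Module

noncomputable section

variable (k : Type*) [Field k]

/-- The rank of a three-way tensor: the minimal number `r` of simple (rank-one)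
tensors such that `p` is a linear combination (in fact a sum) of `r` of them. -/
def tRank {A B C : Type*} [AddCommGroup A] [Module k A] [AddCommGroup B] [Module k B]
    [AddCommGroup C] [Module k C] (p : A ⊗[k] (B ⊗[k] C)) : ℕ :=
  sInf {r : ℕ | ∃ (a : Fin r → A) (b : Fin r → B) (c : Fin r → C),
    p = ∑ i, a i ⊗ₜ[k] (b i ⊗ₜ[k] c i)}

/-- Contraction of a tensor in `A ⊗ M` against a functional on `A`. -/
def contrA {A M : Type*} [AddCommGroup A] [Module k A] [AddCommGroup M] [Module k M]
    (α : Module.Dual k A) : A ⊗[k] M →ₗ[k] M :=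
  (TensorProduct.lid k M).toLinearMap ∘ₗ TensorProduct.map α LinearMap.id

variable (A' A'' B' B'' C' C'' : Type*)
  [AddCommGroup A'] [Module k A'] [AddCommGroup A''] [Module k A'']
  [AddCommGroup B'] [Module k B'] [AddCommGroup B''] [Module k B'']
  [AddCommGroup C'] [Module k C'] [AddCommGroup C''] [Module k C'']

/-- Inclusion of `A'⊗B'⊗C'` into `(A'⊕A'')⊗(B'⊕B'')⊗(C'⊕C'')`. -/
def incl3L : (A' ⊗[k] (B' ⊗[k] C')) →ₗ[k] ((A' × A'') ⊗[k] ((B' × B'') ⊗[k] (C' × C''))) :=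
  TensorProduct.map (LinearMap.inl k A' A'')
    (TensorProduct.map (LinearMap.inl k B' B'') (LinearMap.inl k C' C''))

/-- Inclusion of `A''⊗B''⊗C''` into `(A'⊕A'')⊗(B'⊕B'')⊗(C'⊕C'')`. -/
def incl3R : (A'' ⊗[k] (B'' ⊗[k] C'')) →ₗ[k] ((A' × A'') ⊗[k] ((B' × B'') ⊗[k] (C' × C''))) :=
  TensorProduct.map (LinearMap.inr k A' A'')
    (TensorProduct.map (LinearMap.inr k B' B'') (LinearMap.inr k C' C''))

namespace RankAdditivityAux

variable {k}
variable {A B C : Type*} [AddCommGroup A] [Module k A] [AddCommGroup B] [Module k B]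
    [AddCommGroup C] [Module k C]

/-- Any tensor admits a finite decomposition into simple tensors. -/
lemma exists_repr (p : A ⊗[k] (B ⊗[k] C)) : ∃ (r : ℕ) (a : Fin r → A) (b : Fin r → B)
    (c : Fin r → C), p = ∑ i, a i ⊗ₜ[k] (b i ⊗ₜ[k] c i) := by
  induction p using TensorProduct.induction_on with
  | zero => exact ⟨0, ![], ![], ![], by simp⟩
  | tmul x m =>
      obtain ⟨S, hS⟩ := TensorProduct.exists_finset m
      refine ⟨S.card, fun _ => x, fun i => (S.equivFin.symm i).1.1,
        fun i => (S.equivFin.symm i).1.2, ?_⟩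
      rw [hS, TensorProduct.tmul_sum,
        ← Finset.sum_coe_sort S (fun i => x ⊗ₜ[k] (i.1 ⊗ₜ[k] i.2))]
      exact (Equiv.sum_comp S.equivFin.symm
        fun i => x ⊗ₜ[k] ((i : B × C).1 ⊗ₜ[k] (i : B × C).2)).symm
  | add p q hp hq =>
      obtain ⟨r₁, a₁, b₁, c₁, h₁⟩ := hp
      obtain ⟨r₂, a₂, b₂, c₂, h₂⟩ := hq
      refine ⟨r₁ + r₂, Fin.append a₁ a₂, Fin.append b₁ b₂, Fin.append c₁ c₂, ?_⟩
      rw [h₁, h₂, Fin.sum_univ_add]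
      simp [Fin.append_left, Fin.append_right]

lemma tRank_set_nonempty (p : A ⊗[k] (B ⊗[k] C)) :
    {r : ℕ | ∃ (a : Fin r → A) (b : Fin r → B) (c : Fin r → C),
      p = ∑ i, a i ⊗ₜ[k] (b i ⊗ₜ[k] c i)}.Nonempty := by
  obtain ⟨r, a, b, c, h⟩ := exists_repr p
  exact ⟨r, a, b, c, h⟩

lemma tRank_le_of_repr {r : ℕ} {a : Fin r → A} {b : Fin r → B} {c : Fin r → C}
    {p : A ⊗[k] (B ⊗[k] C)} (h : p = ∑ i, a i ⊗ₜ[k] (b i ⊗ₜ[k] c i)) : tRank k p ≤ r :=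
  Nat.sInf_le ⟨a, b, c, h⟩

lemma tRank_spec (p : A ⊗[k] (B ⊗[k] C)) : ∃ (a : Fin (tRank k p) → A)
    (b : Fin (tRank k p) → B) (c : Fin (tRank k p) → C),
    p = ∑ i, a i ⊗ₜ[k] (b i ⊗ₜ[k] c i) :=
  Nat.sInf_mem (tRank_set_nonempty p)

/-- Rank bound for a sum of simple tensors indexed by a finset. -/
lemma tRank_le_card {ι : Type*} (T : Finset ι) (a : ι → A) (b : ι → B) (c : ι → C)
    {p : A ⊗[k] (B ⊗[k] C)} (h : p = ∑ i ∈ T, a i ⊗ₜ[k] (b i ⊗ₜ[k] c i)) :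
    tRank k p ≤ T.card := by
  refine tRank_le_of_repr (r := T.card) (a := fun i => a (T.equivFin.symm i).1)
    (b := fun i => b (T.equivFin.symm i).1) (c := fun i => c (T.equivFin.symm i).1) ?_
  rw [h, ← Finset.sum_coe_sort T (fun i => a i ⊗ₜ[k] (b i ⊗ₜ[k] c i))]
  exact (Equiv.sum_comp T.equivFin.symm
    fun i => a (i : ι) ⊗ₜ[k] (b (i : ι) ⊗ₜ[k] c (i : ι))).symm

lemma tRank_add_le_of_repr {r₁ r₂ : ℕ} {p q : A ⊗[k] (B ⊗[k] C)}
    {a₁ : Fin r₁ → A} {b₁ : Fin r₁ → B} {c₁ : Fin r₁ → C}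
    {a₂ : Fin r₂ → A} {b₂ : Fin r₂ → B} {c₂ : Fin r₂ → C}
    (h₁ : p = ∑ i, a₁ i ⊗ₜ[k] (b₁ i ⊗ₜ[k] c₁ i)) (h₂ : q = ∑ i, a₂ i ⊗ₜ[k] (b₂ i ⊗ₜ[k] c₂ i)) :
    tRank k (p + q) ≤ r₁ + r₂ := by
  refine tRank_le_of_repr (a := Fin.append a₁ a₂) (b := Fin.append b₁ b₂)
    (c := Fin.append c₁ c₂) ?_
  rw [h₁, h₂, Fin.sum_univ_add]
  simp [Fin.append_left, Fin.append_right]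

lemma tRank_add_le (p q : A ⊗[k] (B ⊗[k] C)) : tRank k (p + q) ≤ tRank k p + tRank k q := by
  obtain ⟨a₁, b₁, c₁, h₁⟩ := tRank_spec p
  obtain ⟨a₂, b₂, c₂, h₂⟩ := tRank_spec q
  exact tRank_add_le_of_repr h₁ h₂

/-- A linear map can take arbitrary prescribed values on a linearly independent family. -/
lemma exists_linearMap_eq {V W : Type*} [AddCommGroup V] [Module k V] [AddCommGroup W]
    [Module k W] {n : ℕ} {v : Fin n → V} (hv : LinearIndependent k v) (w : Fin n → W) :
    ∃ Γ : V →ₗ[k] W, ∀ j, Γ (v j) = w j := by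
  have hv' : LinearIndepOn k id (Set.range v) := (linearIndepOn_id_range_iff hv.injective).mpr hv
  let bs : Basis _ k V := Basis.extend hv'
  classical
  let val : hv'.extend (Set.subset_univ _) → W :=
    fun x => if h : ∃ j, v j = (x : V) then w h.choose else 0
  refine ⟨bs.constr k val, fun j => ?_⟩
  have hmem : v j ∈ hv'.extend (Set.subset_univ _) :=
    hv'.subset_extend _ ⟨j, rfl⟩
  have : v j = bs ⟨v j, hmem⟩ := by simp [bs, Module.Basis.extend_apply_self]
  rw [this, Module.Basis.constr_basis]
  have hex : ∃ j', v j' = v j := ⟨j, rfl⟩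
  simp only [val, dif_pos hex]
  congr 1
  exact hv.injective hex.choose_spec

/-- From a spanning family of a finite-dimensional space, one can choose `dim`-many indices
and a linear map with prescribed values there. -/
lemma exists_kill_map {A' A'' : Type*} [AddCommGroup A'] [Module k A'] [AddCommGroup A'']
    [Module k A''] [FiniteDimensional k A''] {r : ℕ} (x' : Fin r → A') (x'' : Fin r → A'')
    (hspan : Submodule.span k (Set.range x'') = ⊤) :
    ∃ (Φ : A'' →ₗ[k] A') (S : Finset (Fin r)), finrank k A'' ≤ S.card ∧
      ∀ i ∈ S, x' i + Φ (x'' i) = 0 := by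
  classical
  obtain ⟨t, htsub, htspan, htli⟩ := exists_linearIndependent k (Set.range x'')
  haveI : Fintype t := (((Set.finite_range x'').subset htsub).fintype)
  let bt : Basis t k A'' := Basis.mk htli (by rw [Subtype.range_coe, htspan, hspan])
  have hchoose : ∀ u : t, ∃ i, x'' i = (u : A'') := fun u => htsub u.2
  let ι : t → Fin r := fun u => (hchoose u).choose
  have hι : ∀ u : t, x'' (ι u) = (u : A'') := fun u => (hchoose u).choose_spec
  have hιinj : Function.Injective ι := by
    intro u u' h
    have := hι u
    rw [h, hι u'] at this
    exact Subtype.ext this.symm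
  let Φ : A'' →ₗ[k] A' := bt.constr k (fun u => - x' (ι u))
  refine ⟨Φ, Finset.image ι Finset.univ, ?_, ?_⟩
  · rw [Finset.card_image_of_injective _ hιinj, Finset.card_univ,
      Module.finrank_eq_card_basis bt]
  · intro i hi
    obtain ⟨u, -, rfl⟩ := Finset.mem_image.mp hi
    have : x'' (ι u) = bt u := by rw [hι u]; simp [bt]
    rw [this, Basis.constr_basis]
    simp

/-- `A`-conciseness forces the `A''`-components of any decomposition to span `A''`. -/
lemma span_eq_top_of_concise {A'' M : Type*} [AddCommGroup A''] [Module k A'']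
    [AddCommGroup M] [Module k M] [FiniteDimensional k A'']
    {p'' : A'' ⊗[k] M}
    (hconcise : Function.Injective fun α : Module.Dual k A'' => contrA k α p'')
    {r : ℕ} {x'' : Fin r → A''} {m : Fin r → M}
    (hp : p'' = ∑ i, x'' i ⊗ₜ[k] m i) :
    Submodule.span k (Set.range x'') = ⊤ := by
  by_contra hne
  obtain ⟨φ, hφ0, hφ⟩ := Submodule.exists_dual_map_eq_bot_of_lt_top
    (lt_top_iff_ne_top.mpr hne) inferInstance
  have hvanish : ∀ u ∈ Submodule.span k (Set.range x''), φ u = 0 := by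
    intro u hu
    have : φ u ∈ (Submodule.span k (Set.range x'')).map φ := Submodule.mem_map_of_mem hu
    rwa [hφ, Submodule.mem_bot] at this
  have h1 : contrA k φ p'' = contrA k (0 : Module.Dual k A'') p'' := by
    rw [hp, map_sum, map_sum]
    refine Finset.sum_congr rfl fun i _ => ?_
    have : φ (x'' i) = 0 := hvanish _ (Submodule.subset_span ⟨i, rfl⟩)
    simp [contrA, this]
  exact hφ0 (hconcise h1)

end RankAdditivityAux

namespace RankAdditivityAux

variable {k A' A'' B' B'' C' C''}

lemma incl3L_repr {r₁ : ℕ} {a₁ : Fin r₁ → A'} {b₁ : Fin r₁ → B'} {c₁ : Fin r₁ → C'}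
    {p' : A' ⊗[k] (B' ⊗[k] C')} (h₁ : p' = ∑ i, a₁ i ⊗ₜ[k] (b₁ i ⊗ₜ[k] c₁ i)) :
    incl3L k A' A'' B' B'' C' C'' p'
      = ∑ i, ((a₁ i, 0) : A' × A'') ⊗ₜ[k]
          (((b₁ i, 0) : B' × B'') ⊗ₜ[k] ((c₁ i, 0) : C' × C'')) := by
  rw [h₁]; unfold incl3L; rw [map_sum]; simp

lemma incl3R_repr {r₂ : ℕ} {a₂ : Fin r₂ → A''} {b₂ : Fin r₂ → B''} {c₂ : Fin r₂ → C''}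
    {p'' : A'' ⊗[k] (B'' ⊗[k] C'')} (h₂ : p'' = ∑ i, a₂ i ⊗ₜ[k] (b₂ i ⊗ₜ[k] c₂ i)) :
    incl3R k A' A'' B' B'' C' C'' p''
      = ∑ i, ((0, a₂ i) : A' × A'') ⊗ₜ[k]
          (((0, b₂ i) : B' × B'') ⊗ₜ[k] ((0, c₂ i) : C' × C'')) := by
  rw [h₂]; unfold incl3R; rw [map_sum]; simp

end RankAdditivityAux

open RankAdditivityAux in
/-- Over an arbitrary field `k`, if `p'' ∈ A''⊗B''⊗C''` is `A''`-concise
(the induced map `A''* → B''⊗C''` is injective) and `R(p'') ≤ dim A'' + 2`, then for any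
`p' ∈ A'⊗B'⊗C'` the additivity of the tensor rank holds: `R(p'⊕p'') = R(p') + R(p'')`. -/
theorem rank_additivity_of_concise_of_rank_le_dim_add_two
    [FiniteDimensional k A'] [FiniteDimensional k A''] [FiniteDimensional k B']
    [FiniteDimensional k B''] [FiniteDimensional k C'] [FiniteDimensional k C'']
    (p' : A' ⊗[k] (B' ⊗[k] C')) (p'' : A'' ⊗[k] (B'' ⊗[k] C''))
    (hconcise : Function.Injective fun α : Module.Dual k A'' => contrA k α p'')
    (hrank : tRank k p'' ≤ finrank k A'' + 2) :
    tRank k (incl3L k A' A'' B' B'' C' C'' p' + incl3R k A' A'' B' B'' C' C'' p'')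
      = tRank k p' + tRank k p'' := by
  classical
  refine le_antisymm ?_ ?_
  · -- subadditivity: easy direction
    obtain ⟨a₁, b₁, c₁, h₁⟩ := tRank_spec p'
    obtain ⟨a₂, b₂, c₂, h₂⟩ := tRank_spec p''
    exact tRank_add_le_of_repr (incl3L_repr h₁) (incl3R_repr h₂)
  · -- the hard direction
    set q₀ := incl3L k A' A'' B' B'' C' C'' p' + incl3R k A' A'' B' B'' C' C'' p'' with hq₀
    by_contra hcon
    push_neg at hcon
    obtain ⟨x, y, z, hxyz⟩ := tRank_spec q₀
    -- p'' is the image of q₀ under the triple second projections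
    have base : TensorProduct.map (LinearMap.snd k A' A'')
        (TensorProduct.map (LinearMap.snd k B' B'') (LinearMap.snd k C' C'')) q₀ = p'' := by
      rw [hq₀, map_add]
      have e1 : TensorProduct.map (LinearMap.snd k A' A'')
          (TensorProduct.map (LinearMap.snd k B' B'') (LinearMap.snd k C' C''))
          (incl3L k A' A'' B' B'' C' C'' p') = 0 := by
        unfold incl3L
        rw [← LinearMap.comp_apply, ← TensorProduct.map_comp, ← TensorProduct.map_comp]
        have hB : (LinearMap.snd k B' B'') ∘ₗ (LinearMap.inl k B' B'') = 0 := by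
          ext b; simp
        have hC : (LinearMap.snd k C' C'') ∘ₗ (LinearMap.inl k C' C'') = 0 := by
          ext c; simp
        rw [hB, TensorProduct.map_zero_left, TensorProduct.map_zero_right]
        simp
      have e2 : TensorProduct.map (LinearMap.snd k A' A'')
          (TensorProduct.map (LinearMap.snd k B' B'') (LinearMap.snd k C' C''))
          (incl3R k A' A'' B' B'' C' C'' p'') = p'' := by
        unfold incl3R
        rw [← LinearMap.comp_apply, ← TensorProduct.map_comp, ← TensorProduct.map_comp]
        have hA : (LinearMap.snd k A' A'') ∘ₗ (LinearMap.inr k A' A'') = LinearMap.id := by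
          ext a; simp
        have hB : (LinearMap.snd k B' B'') ∘ₗ (LinearMap.inr k B' B'') = LinearMap.id := by
          ext b; simp
        have hC : (LinearMap.snd k C' C'') ∘ₗ (LinearMap.inr k C' C'') = LinearMap.id := by
          ext c; simp
        rw [hA, hB, hC, TensorProduct.map_id, TensorProduct.map_id]
        simp
      rw [e1, e2, zero_add]
    have hp'' : p'' = ∑ i, (x i).2 ⊗ₜ[k] ((y i).2 ⊗ₜ[k] (z i).2) := by
      have e := congrArg (fun t => TensorProduct.map (LinearMap.snd k A' A'')
        (TensorProduct.map (LinearMap.snd k B' B'') (LinearMap.snd k C' C'')) t) hxyz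
      simp only [map_sum, TensorProduct.map_tmul, LinearMap.snd_apply] at e
      rw [← base]
      exact e
    -- conciseness: the x''-components span A''
    have hspan : Submodule.span k (Set.range fun i => (x i).2) = ⊤ :=
      span_eq_top_of_concise hconcise hp''
    obtain ⟨Φ, S, hScard, hSkill⟩ :=
      exists_kill_map (fun i => (x i).1) (fun i => (x i).2) hspan
    set K : Finset (Fin (tRank k q₀)) :=
      Finset.univ.filter (fun i => (x i).1 + Φ ((x i).2) = 0) with hK
    have hSsubK : S ⊆ K := by
      intro i hi
      rw [hK, Finset.mem_filter]
      exact ⟨Finset.mem_univ i, hSkill i hi⟩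
    have hKkill : ∀ i ∈ K, (x i).1 + Φ ((x i).2) = 0 := by
      intro i hi
      rw [hK, Finset.mem_filter] at hi
      exact hi.2
    have hKcard : finrank k A'' ≤ K.card := le_trans hScard (Finset.card_le_card hSsubK)
    -- KEY: two-directional (A,B) elimination
    have KEY : ∀ (Γ : B'' →ₗ[k] B') (D : Finset (Fin (tRank k q₀))),
        (∀ i ∈ D, (x i).1 + Φ ((x i).2) = 0 ∨ (y i).1 + Γ ((y i).2) = 0) →
        tRank k p' + D.card ≤ tRank k q₀ := by
      intro Γ D hD
      set FA : (A' × A'') →ₗ[k] A' := LinearMap.fst k A' A'' + Φ ∘ₗ LinearMap.snd k A' A''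
        with hFA
      set FB : (B' × B'') →ₗ[k] B' := LinearMap.fst k B' B'' + Γ ∘ₗ LinearMap.snd k B' B''
        with hFB
      set FC : (C' × C'') →ₗ[k] C' := LinearMap.fst k C' C'' with hFC
      have hq1 : TensorProduct.map FA (TensorProduct.map FB FC) q₀ = p' := by
        rw [hq₀, map_add]
        have e1 : TensorProduct.map FA (TensorProduct.map FB FC)
            (incl3L k A' A'' B' B'' C' C'' p') = p' := by
          unfold incl3L
          rw [← LinearMap.comp_apply, ← TensorProduct.map_comp, ← TensorProduct.map_comp]
          have hA : FA ∘ₗ (LinearMap.inl k A' A'') = LinearMap.id := by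
            ext a; simp [hFA]
          have hB : FB ∘ₗ (LinearMap.inl k B' B'') = LinearMap.id := by
            ext b; simp [hFB]
          have hC : FC ∘ₗ (LinearMap.inl k C' C'') = LinearMap.id := by
            ext c; simp [hFC]
          rw [hA, hB, hC, TensorProduct.map_id, TensorProduct.map_id]
          simp
        have e2 : TensorProduct.map FA (TensorProduct.map FB FC)
            (incl3R k A' A'' B' B'' C' C'' p'') = 0 := by
          unfold incl3R
          rw [← LinearMap.comp_apply, ← TensorProduct.map_comp, ← TensorProduct.map_comp]
          have hC : FC ∘ₗ (LinearMap.inr k C' C'') = 0 := by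
            ext c; simp [hFC]
          rw [hC, TensorProduct.map_zero_right, TensorProduct.map_zero_right]
          simp
        rw [e1, e2, add_zero]
      have e : TensorProduct.map FA (TensorProduct.map FB FC) q₀
          = ∑ i, FA (x i) ⊗ₜ[k] (FB (y i) ⊗ₜ[k] FC (z i)) := by
        have e := congrArg (fun t => TensorProduct.map FA (TensorProduct.map FB FC) t) hxyz
        simpa only [map_sum, TensorProduct.map_tmul] using e
      have hq2 : p' = ∑ i ∈ Dᶜ, FA (x i) ⊗ₜ[k] (FB (y i) ⊗ₜ[k] FC (z i)) := by
        rw [← hq1, e]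
        refine (Finset.sum_subset (Finset.subset_univ _) fun i _ hiD => ?_).symm
        have hiD' : i ∈ D := by simpa using hiD
        rcases hD i hiD' with h | h
        · have h0 : FA (x i) = 0 := by rw [hFA]; simpa using h
          rw [h0, TensorProduct.zero_tmul]
        · have h0 : FB (y i) = 0 := by rw [hFB]; simpa using h
          rw [h0, TensorProduct.zero_tmul, TensorProduct.tmul_zero]
      have hle : tRank k p' ≤ Dᶜ.card := tRank_le_card Dᶜ _ _ _ hq2
      have hcards : D.card + Dᶜ.card = tRank k q₀ := by
        rw [Finset.card_add_card_compl, Fintype.card_fin]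
      omega
    -- KEY_C: two-directional (A,C) elimination
    have KEY_C : ∀ (Ξ : C'' →ₗ[k] C') (D : Finset (Fin (tRank k q₀))),
        (∀ i ∈ D, (x i).1 + Φ ((x i).2) = 0 ∨ (z i).1 + Ξ ((z i).2) = 0) →
        tRank k p' + D.card ≤ tRank k q₀ := by
      intro Ξ D hD
      set FA : (A' × A'') →ₗ[k] A' := LinearMap.fst k A' A'' + Φ ∘ₗ LinearMap.snd k A' A''
        with hFA
      set FB : (B' × B'') →ₗ[k] B' := LinearMap.fst k B' B'' with hFB
      set FC : (C' × C'') →ₗ[k] C' := LinearMap.fst k C' C'' + Ξ ∘ₗ LinearMap.snd k C' C''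
        with hFC
      have hq1 : TensorProduct.map FA (TensorProduct.map FB FC) q₀ = p' := by
        rw [hq₀, map_add]
        have e1 : TensorProduct.map FA (TensorProduct.map FB FC)
            (incl3L k A' A'' B' B'' C' C'' p') = p' := by
          unfold incl3L
          rw [← LinearMap.comp_apply, ← TensorProduct.map_comp, ← TensorProduct.map_comp]
          have hA : FA ∘ₗ (LinearMap.inl k A' A'') = LinearMap.id := by
            ext a; simp [hFA]
          have hB : FB ∘ₗ (LinearMap.inl k B' B'') = LinearMap.id := by
            ext b; simp [hFB]
          have hC : FC ∘ₗ (LinearMap.inl k C' C'') = LinearMap.id := by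
            ext c; simp [hFC]
          rw [hA, hB, hC, TensorProduct.map_id, TensorProduct.map_id]
          simp
        have e2 : TensorProduct.map FA (TensorProduct.map FB FC)
            (incl3R k A' A'' B' B'' C' C'' p'') = 0 := by
          unfold incl3R
          rw [← LinearMap.comp_apply, ← TensorProduct.map_comp, ← TensorProduct.map_comp]
          have hB : FB ∘ₗ (LinearMap.inr k B' B'') = 0 := by
            ext b; simp [hFB]
          rw [hB, TensorProduct.map_zero_left, TensorProduct.map_zero_right]
          simp
        rw [e1, e2, add_zero]
      have e : TensorProduct.map FA (TensorProduct.map FB FC) q₀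
          = ∑ i, FA (x i) ⊗ₜ[k] (FB (y i) ⊗ₜ[k] FC (z i)) := by
        have e := congrArg (fun t => TensorProduct.map FA (TensorProduct.map FB FC) t) hxyz
        simpa only [map_sum, TensorProduct.map_tmul] using e
      have hq2 : p' = ∑ i ∈ Dᶜ, FA (x i) ⊗ₜ[k] (FB (y i) ⊗ₜ[k] FC (z i)) := by
        rw [← hq1, e]
        refine (Finset.sum_subset (Finset.subset_univ _) fun i _ hiD => ?_).symm
        have hiD' : i ∈ D := by simpa using hiD
        rcases hD i hiD' with h | h
        · have h0 : FA (x i) = 0 := by rw [hFA]; simpa using h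
          rw [h0, TensorProduct.zero_tmul]
        · have h0 : FC (z i) = 0 := by rw [hFC]; simpa using h
          rw [h0, TensorProduct.tmul_zero, TensorProduct.tmul_zero]
      have hle : tRank k p' ≤ Dᶜ.card := tRank_le_card Dᶜ _ _ _ hq2
      have hcards : D.card + Dᶜ.card = tRank k q₀ := by
        rw [Finset.card_add_card_compl, Fintype.card_fin]
      omega
    -- main case analysis
    by_cases hy0 : ∀ j, j ∉ K → (y j).2 = 0
    · -- off-K terms of p'' vanish
      have hsum : p'' = ∑ i ∈ K, (x i).2 ⊗ₜ[k] ((y i).2 ⊗ₜ[k] (z i).2) := by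
        rw [hp'']
        refine (Finset.sum_subset (Finset.subset_univ K) fun i _ hiK => ?_).symm
        rw [hy0 i hiK]
        simp
      have h1 : tRank k p'' ≤ K.card := tRank_le_card K _ _ _ hsum
      have h2 : tRank k p' + K.card ≤ tRank k q₀ := KEY 0 K (fun i hi => Or.inl (hKkill i hi))
      omega
    · by_cases hz0 : ∀ j, j ∉ K → (z j).2 = 0
      · have hsum : p'' = ∑ i ∈ K, (x i).2 ⊗ₜ[k] ((y i).2 ⊗ₜ[k] (z i).2) := by
          rw [hp'']
          refine (Finset.sum_subset (Finset.subset_univ K) fun i _ hiK => ?_).symm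
          rw [hz0 i hiK]
          simp
        have h1 : tRank k p'' ≤ K.card := tRank_le_card K _ _ _ hsum
        have h2 : tRank k p' + K.card ≤ tRank k q₀ := KEY 0 K (fun i hi => Or.inl (hKkill i hi))
        omega
      · push_neg at hy0 hz0
        obtain ⟨jy, hjyK, hjy0⟩ := hy0
        obtain ⟨jz, hjzK, hjz0⟩ := hz0
        -- all y''-components off K are multiples of ŷ := (y jy).2
        have Cy : ∀ j, j ∉ K → ∃ b : k, (y j).2 = b • (y jy).2 := by
          by_contra hCy
          push_neg at hCy
          obtain ⟨j₂, hj₂K, hj₂⟩ := hCy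
          have hpair : LinearIndependent k ![(y jy).2, (y j₂).2] :=
            (LinearIndependent.pair_iff' hjy0).mpr fun a ha => hj₂ a ha.symm
          obtain ⟨Γ, hΓ⟩ := exists_linearMap_eq hpair ![-(y jy).1, -(y j₂).1]
          have hΓy : Γ ((y jy).2) = -(y jy).1 := by simpa using hΓ 0
          have hΓ2 : Γ ((y j₂).2) = -(y j₂).1 := by simpa using hΓ 1
          have hjyj₂ : jy ≠ j₂ := by
            intro h
            exact hj₂ 1 (by rw [one_smul, ← h])
          have hD : ∀ i ∈ insert jy (insert j₂ K),
              (x i).1 + Φ ((x i).2) = 0 ∨ (y i).1 + Γ ((y i).2) = 0 := by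
            intro i hi
            rcases Finset.mem_insert.mp hi with h | hi
            · subst h; right; rw [hΓy]; abel
            · rcases Finset.mem_insert.mp hi with h | hi
              · subst h; right; rw [hΓ2]; abel
              · exact Or.inl (hKkill i hi)
          have hcard : (insert jy (insert j₂ K)).card = K.card + 2 := by
            rw [Finset.card_insert_of_notMem (by simp [Finset.mem_insert, hjyj₂, hjyK]),
              Finset.card_insert_of_notMem hj₂K]
          have hk2 := KEY Γ _ hD
          rw [hcard] at hk2
          omega
        -- all z''-components off K are multiples of ẑ := (z jz).2
        have Cz : ∀ j, j ∉ K → ∃ b : k, (z j).2 = b • (z jz).2 := by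
          by_contra hCz
          push_neg at hCz
          obtain ⟨j₂, hj₂K, hj₂⟩ := hCz
          have hpair : LinearIndependent k ![(z jz).2, (z j₂).2] :=
            (LinearIndependent.pair_iff' hjz0).mpr fun a ha => hj₂ a ha.symm
          obtain ⟨Ξ, hΞ⟩ := exists_linearMap_eq hpair ![-(z jz).1, -(z j₂).1]
          have hΞz : Ξ ((z jz).2) = -(z jz).1 := by simpa using hΞ 0
          have hΞ2 : Ξ ((z j₂).2) = -(z j₂).1 := by simpa using hΞ 1
          have hjzj₂ : jz ≠ j₂ := by
            intro h
            exact hj₂ 1 (by rw [one_smul, ← h])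
          have hD : ∀ i ∈ insert jz (insert j₂ K),
              (x i).1 + Φ ((x i).2) = 0 ∨ (z i).1 + Ξ ((z i).2) = 0 := by
            intro i hi
            rcases Finset.mem_insert.mp hi with h | hi
            · subst h; right; rw [hΞz]; abel
            · rcases Finset.mem_insert.mp hi with h | hi
              · subst h; right; rw [hΞ2]; abel
              · exact Or.inl (hKkill i hi)
          have hcard : (insert jz (insert j₂ K)).card = K.card + 2 := by
            rw [Finset.card_insert_of_notMem (by simp [Finset.mem_insert, hjzj₂, hjzK]),
              Finset.card_insert_of_notMem hj₂K]
          have hk2 := KEY_C Ξ _ hD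
          rw [hcard] at hk2
          omega
        choose! β hβ using Cy
        choose! γ hγ using Cz
        -- the off-K part of p'' is a single simple tensor
        have hoff : ∑ i ∈ Kᶜ, (x i).2 ⊗ₜ[k] ((y i).2 ⊗ₜ[k] (z i).2)
            = (∑ i ∈ Kᶜ, (β i * γ i) • (x i).2) ⊗ₜ[k] ((y jy).2 ⊗ₜ[k] (z jz).2) := by
          rw [TensorProduct.sum_tmul]
          refine Finset.sum_congr rfl fun i hi => ?_
          have hiK : i ∉ K := Finset.mem_compl.mp hi
          rw [hβ i hiK, hγ i hiK]
          simp only [TensorProduct.smul_tmul, TensorProduct.tmul_smul, smul_smul]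
          rw [mul_comm]
        have hsplit : p'' = (∑ i ∈ K, (x i).2 ⊗ₜ[k] ((y i).2 ⊗ₜ[k] (z i).2))
            + (∑ i ∈ Kᶜ, (β i * γ i) • (x i).2) ⊗ₜ[k] ((y jy).2 ⊗ₜ[k] (z jz).2) := by
          rw [hp'', ← Finset.sum_add_sum_compl K, hoff]
        have h1 : tRank k p'' ≤ K.card + 1 := by
          rw [hsplit]
          refine le_trans (tRank_add_le _ _) (add_le_add ?_ ?_)
          · exact tRank_le_card K _ _ _ rfl
          · refine tRank_le_of_repr (r := 1)
              (a := fun _ => ∑ i ∈ Kᶜ, (β i * γ i) • (x i).2)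
              (b := fun _ => (y jy).2) (c := fun _ => (z jz).2) ?_
            simp
        -- kill K together with jy
        have hone : LinearIndependent k ![(y jy).2] :=
          linearIndependent_unique_iff.mpr (by simpa using hjy0)
        obtain ⟨Γ₁, hΓ₁⟩ := exists_linearMap_eq hone ![-(y jy).1]
        have hΓ₁y : Γ₁ ((y jy).2) = -(y jy).1 := by simpa using hΓ₁ 0
        have hD : ∀ i ∈ insert jy K,
            (x i).1 + Φ ((x i).2) = 0 ∨ (y i).1 + Γ₁ ((y i).2) = 0 := by
          intro i hi
          rcases Finset.mem_insert.mp hi with h | hi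
          · subst h; right; rw [hΓ₁y]; abel
          · exact Or.inl (hKkill i hi)
        have h2 := KEY Γ₁ _ hD
        rw [Finset.card_insert_of_notMem hjyK] at h2
        omega

end
end

section
/- Let k be any field, A, B, C finite-dimensional k-vector spaces and A' ⊆ A a linear subspace. Suppose p ∈ A'⊗B⊗C and p lies in the linear span of simple tensors s_1, …, s_r, where s_i = a_i⊗b_i⊗c_i with a_i ∈ A, b_i ∈ B, c_i ∈ C. Then r ≥ R(p) + dim span(a_1, …, a_r) − dim A'. -/
open TensorProduct Module

noncomputable section

variable (k : Type*) [Field k]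

lemma sum_tmul_indep_eq_zero {Q M : Type*} [AddCommGroup Q] [Module k Q]
    [AddCommGroup M] [Module k M] {ι : Type*} [Fintype ι] [DecidableEq ι] {e : ι → Q}
    (he : LinearIndependent k e) {v : ι → M} (h : ∑ i, e i ⊗ₜ[k] v i = 0) (i : ι) :
    v i = 0 := by
  classical
  obtain ⟨q, hq⟩ := Submodule.exists_isCompl (Submodule.span k (Set.range e))
  set b := Basis.span he
  set φ : Q →ₗ[k] k := (b.coord i) ∘ₗ (Submodule.linearProjOfIsCompl _ q hq)
  have hφ : ∀ j, φ (e j) = if j = i then 1 else 0 := by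
    intro j
    have h1 : Submodule.linearProjOfIsCompl _ q hq (e j)
        = ⟨e j, Submodule.subset_span (Set.mem_range_self j)⟩ :=
      Submodule.linearProjOfIsCompl_apply_left hq
        ⟨e j, Submodule.subset_span (Set.mem_range_self j)⟩
    have h2 : (⟨e j, Submodule.subset_span (Set.mem_range_self j)⟩ :
        Submodule.span k (Set.range e)) = b j := by
      ext; simp [b, Basis.span_apply]
    simp only [φ, LinearMap.comp_apply, h1, h2, Basis.coord_apply, Basis.repr_self]
    simp [Finsupp.single_apply]
  have := congrArg ((TensorProduct.lid k M).toLinearMap ∘ₗ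
      TensorProduct.map φ (LinearMap.id : M →ₗ[k] M)) h
  simpa [map_sum, hφ, Finset.sum_ite_eq', apply_ite] using this

/-- If `p ∈ A'⊗B⊗C` for a subspace `A' ⊆ A` and `p` lies in the span of
simple tensors `s i = a i ⊗ b i ⊗ c i`, `i = 1, …, r`, then
`r ≥ R(p) + dim span(a_1, …, a_r) − dim A'` (stated additively to avoid truncated
subtraction). -/
theorem rank_lower_bound_of_decomposition_in_larger_space
    (A B C : Type*) [AddCommGroup A] [Module k A] [FiniteDimensional k A]
    [AddCommGroup B] [Module k B] [AddCommGroup C] [Module k C]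
    (A' : Submodule k A) (p : A ⊗[k] (B ⊗[k] C))
    (hp : p ∈ LinearMap.range
      (TensorProduct.map A'.subtype (LinearMap.id : (B ⊗[k] C) →ₗ[k] (B ⊗[k] C))))
    (r : ℕ) (a : Fin r → A) (b : Fin r → B) (c : Fin r → C)
    (hspan : p ∈ Submodule.span k (Set.range fun i => a i ⊗ₜ[k] (b i ⊗ₜ[k] c i))) :
    tRank k p + finrank k (Submodule.span k (Set.range a)) ≤ r + finrank k A' := by
  have key : sInf {r : ℕ | ∃ (a : Fin r → A) (b : Fin r → B) (c : Fin r → C),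
      p = ∑ i, a i ⊗ₜ[k] (b i ⊗ₜ[k] c i)}
      + finrank k (Submodule.span k (Set.range a)) ≤ r + finrank k A' := by
    classical
    set W := Submodule.span k (Set.range a) with hW
    set π := A'.mkQ with hπ
    rw [Submodule.mem_span_range_iff_exists_fun] at hspan
    obtain ⟨lam, hl⟩ := hspan
    set g : Fin r → A ⧸ A' := fun i => π (a i) with hg
    obtain ⟨t, hts, htspan, htli⟩ := exists_linearIndependent k (Set.range g)
    haveI : Fintype t := (Set.Finite.subset (Set.finite_range g) hts).fintype
    choose σ hσ using fun x : t => hts x.2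
    have hσinj : Function.Injective σ := fun x y hxy =>
      Subtype.ext (by rw [← hσ x, ← hσ y, hxy])
    have hrange : Set.range ((↑) : t → A ⧸ A') = t := Subtype.range_coe
    set bas : Basis t k (Submodule.span k t) :=
      (Basis.span htli).map (LinearEquiv.ofEq _ _ (by rw [hrange])) with hbas
    have hbasx : ∀ x : t, (bas x : A ⧸ A') = (x : A ⧸ A') := by
      intro x
      simp [hbas, Basis.span_apply]
    have hmem : ∀ i, g i ∈ Submodule.span k t := by
      intro i
      rw [htspan]
      exact Submodule.subset_span (Set.mem_range_self i)
    set co : Fin r → t → k := fun i x => bas.repr ⟨g i, hmem i⟩ x with hco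
    set a'' : Fin r → A := fun i => a i - ∑ x : t, co i x • a (σ x) with ha''
    have hπa'' : ∀ i, π (a'' i) = 0 := by
      intro i
      have hsum : ((∑ x : t, co i x • bas x : Submodule.span k t) : A ⧸ A') = g i := by
        rw [Basis.sum_repr bas ⟨g i, hmem i⟩]
      have hsum2 : ∑ x : t, co i x • (x : A ⧸ A') = g i := by
        rw [← hsum]
        push_cast
        exact Finset.sum_congr rfl fun x _ => by rw [hbasx]
      simp only [ha'', map_sub, map_sum, map_smul]
      have : ∑ x : t, co i x • π (a (σ x)) = ∑ x : t, co i x • (x : A ⧸ A') :=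
        Finset.sum_congr rfl fun x _ => by rw [show π (a (σ x)) = g (σ x) from rfl, hσ]
      rw [this, hsum2, sub_eq_zero]
    have ha_dec : ∀ i, a i = a'' i + ∑ x : t, co i x • a (σ x) := fun i => by simp [ha'']
    set T : Fin r → B ⊗[k] C := fun i => b i ⊗ₜ[k] c i with hT
    set v : t → B ⊗[k] C := fun x => ∑ i, (lam i * co i x) • T i with hv
    have hps : p = (∑ i, (lam i • a'' i) ⊗ₜ[k] T i) + ∑ x : t, a (σ x) ⊗ₜ[k] v x := by
      rw [← hl]
      calc ∑ i, lam i • (a i ⊗ₜ[k] T i)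
          = ∑ i, ((lam i • a'' i) ⊗ₜ[k] T i
              + ∑ x : t, ((lam i * co i x) • a (σ x)) ⊗ₜ[k] T i) := by
            refine Finset.sum_congr rfl fun i _ => ?_
            rw [ha_dec i, add_tmul, smul_add, sum_tmul, Finset.smul_sum]
            simp [smul_tmul', smul_smul]
        _ = (∑ i, (lam i • a'' i) ⊗ₜ[k] T i) + ∑ x : t, a (σ x) ⊗ₜ[k] v x := by
            rw [Finset.sum_add_distrib]
            congr 1
            rw [Finset.sum_comm]
            exact Finset.sum_congr rfl fun x _ => by
              simp only [smul_tmul]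
              rw [← TensorProduct.tmul_sum]
    have hPi : TensorProduct.map π LinearMap.id p = 0 := by
      obtain ⟨q0, hq0⟩ := hp
      have hz : π ∘ₗ A'.subtype = 0 := by
        ext x
        simp [hπ, Submodule.Quotient.mk_eq_zero]
      rw [← hq0, ← LinearMap.comp_apply, ← TensorProduct.map_comp, hz,
        TensorProduct.map_zero_left, LinearMap.zero_apply]
    have hv0 : ∀ x : t, v x = 0 := by
      have h0 : ∑ x : t, (x : A ⧸ A') ⊗ₜ[k] v x = 0 := by
        have h1 := congrArg (TensorProduct.map π LinearMap.id) hps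
        rw [hPi] at h1
        simp only [map_add, map_sum, TensorProduct.map_tmul, LinearMap.id_coe, id_eq] at h1
        have h2 : ∀ i, π (lam i • a'' i) ⊗ₜ[k] T i = 0 := fun i => by
          rw [map_smul, hπa'', smul_zero, TensorProduct.zero_tmul]
        have h3 : ∀ x : t, π (a (σ x)) ⊗ₜ[k] v x = (x : A ⧸ A') ⊗ₜ[k] v x := fun x => by
          rw [show π (a (σ x)) = g (σ x) from rfl, hσ]
        rw [Finset.sum_congr rfl fun i _ => h2 i, Finset.sum_const_zero, zero_add,
          Finset.sum_congr rfl fun x _ => h3 x] at h1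
        exact h1.symm
      exact fun x => sum_tmul_indep_eq_zero k htli h0 x
    have hp2 : p = ∑ i, (lam i • a'' i) ⊗ₜ[k] T i := by
      rw [hps]
      simp [hv0]
    have ha''σ : ∀ x : t, a'' (σ x) = 0 := by
      intro x
      have h1 : (⟨g (σ x), hmem (σ x)⟩ : Submodule.span k t) = bas x := by
        ext
        rw [hbasx]
        exact hσ x
      have h2 : ∀ y : t, co (σ x) y = if x = y then 1 else 0 := by
        intro y
        simp [hco, h1, Basis.repr_self, Finsupp.single_apply]
      simp only [ha'', sub_eq_zero]
      rw [Finset.sum_congr rfl fun y _ => by rw [h2 y]]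
      simp [ite_smul]
    set S : Finset (Fin r) := Finset.image σ Finset.univ with hS
    have hterm : ∀ i ∈ S, (lam i • a'' i) ⊗ₜ[k] T i = 0 := by
      intro i hi
      obtain ⟨x, _, rfl⟩ := Finset.mem_image.mp hi
      rw [ha''σ x, smul_zero, TensorProduct.zero_tmul]
    have hp3 : p = ∑ i ∈ Sᶜ, (lam i • a'' i) ⊗ₜ[k] T i := by
      rw [hp2, ← Finset.sum_compl_add_sum S, Finset.sum_eq_zero hterm, add_zero]
    set m := Sᶜ.card with hm
    set e : Fin m ≃ {x // x ∈ Sᶜ} := Sᶜ.equivFin.symm with he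
    have hp4 : p = ∑ j : Fin m,
        (lam (e j).1 • a'' (e j).1) ⊗ₜ[k] (b (e j).1 ⊗ₜ[k] c (e j).1) := by
      rw [hp3, ← Finset.sum_attach Sᶜ (fun i => (lam i • a'' i) ⊗ₜ[k] T i)]
      exact (Equiv.sum_comp e (fun i : {x // x ∈ Sᶜ} => (lam i.1 • a'' i.1) ⊗ₜ[k] T i.1)).symm
    have htr : sInf {r : ℕ | ∃ (a : Fin r → A) (b : Fin r → B) (c : Fin r → C),
        p = ∑ i, a i ⊗ₜ[k] (b i ⊗ₜ[k] c i)} ≤ m :=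
      Nat.sInf_le ⟨_, _, _, hp4⟩
    have hcardS : S.card = Fintype.card t := by
      rw [hS, Finset.card_image_of_injective _ hσinj, Finset.card_univ]
    have hrm : m + S.card = r := by
      rw [hm, add_comm, Finset.card_add_card_compl, Fintype.card_fin]
    have hW1 : Submodule.map π W = Submodule.span k t := by
      rw [htspan, hW, Submodule.map_span, ← Set.range_comp]
      rfl
    have hWrank : finrank k W ≤ Fintype.card t + finrank k A' := by
      set φ : W →ₗ[k] A ⧸ A' := π ∘ₗ W.subtype with hφ
      have h1 : finrank k (LinearMap.range φ) + finrank k (LinearMap.ker φ) = finrank k W :=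
        LinearMap.finrank_range_add_finrank_ker φ
      have h2 : LinearMap.range φ = Submodule.span k t := by
        rw [hφ, LinearMap.range_comp, Submodule.range_subtype, hW1]
      have h3 : finrank k (Submodule.span k t) = Fintype.card t := by
        rw [finrank_span_set_eq_card htli, Set.toFinset_card]
      have h4 : finrank k (LinearMap.ker φ) ≤ finrank k A' := by
        have hk : LinearMap.ker φ = Submodule.comap W.subtype (A' ⊓ W) := by
          ext x
          simp [hφ, hπ, LinearMap.mem_ker, Submodule.Quotient.mk_eq_zero, x.2]
        rw [hk, (Submodule.comapSubtypeEquivOfLe (inf_le_right : A' ⊓ W ≤ W)).finrank_eq]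
        exact Submodule.finrank_mono inf_le_left
      rw [← h1, h2, h3]
      exact Nat.add_le_add_left h4 _
    refine le_trans (Nat.add_le_add htr hWrank) ?_
    rw [← hcardS, ← add_assoc, hrm]
  exact key
end
end

section
/- Let B' ⊆ B and C' ⊆ C be linear subspaces of finite-dimensional vector spaces over a field k, and let W ⊆ B'⊗C' be a linear subspace. (1) The rank R(W) computed inside B'⊗C' equals the rank computed inside B⊗C (and over k = ℂ the same holds for the border rank of W). (2) Moreover, if W is contained in the linear span of rank-one tensors s_1, …, s_r ∈ B⊗C with s_i = b_i⊗c_i, then r ≥ R(W) + dim span(b_1, …, b_r) − dim B'. -/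
open TensorProduct Module

noncomputable section

/-- The rank of a linear subspace `W ⊆ B⊗C`: the minimal number `r` of rank-one
tensors whose span contains `W`. -/
def sRank (k : Type*) [Field k] {B C : Type*} [AddCommGroup B] [Module k B]
    [AddCommGroup C] [Module k C] (W : Submodule k (B ⊗[k] C)) : ℕ :=
  sInf {r : ℕ | ∃ (b : Fin r → B) (c : Fin r → C),
    W ≤ Submodule.span k (Set.range fun i => b i ⊗ₜ[k] c i)}

/-- The canonical (Euclidean) topology on a finite-dimensional complex vector space. -/
def stdTop (V : Type*) [AddCommGroup V] [Module ℂ V] [FiniteDimensional ℂ V] :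
    TopologicalSpace V :=
  TopologicalSpace.induced (Module.finBasis ℂ V).equivFun inferInstance

/-- The border rank of a linear subspace `W ⊆ B⊗C` over `ℂ`: the minimal `r` such that
`W` is a limit, in the Grassmannian of `(dim W)`-dimensional subspaces, of subspaces of
rank at most `r`.  Convergence in the Grassmannian is expressed via converging
sequences of injective parametrizations (frames). -/
def sBRank {B C : Type*} [AddCommGroup B] [Module ℂ B] [FiniteDimensional ℂ B]
    [AddCommGroup C] [Module ℂ C] [FiniteDimensional ℂ C]
    (W : Submodule ℂ (B ⊗[ℂ] C)) : ℕ :=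
  sInf {r : ℕ | ∃ u : (Fin (finrank ℂ W) → ℂ) →ₗ[ℂ] (B ⊗[ℂ] C),
    Function.Injective u ∧ LinearMap.range u = W ∧
    ∃ v : ℕ → ((Fin (finrank ℂ W) → ℂ) →ₗ[ℂ] (B ⊗[ℂ] C)),
      (∀ n, Function.Injective (v n) ∧ sRank ℂ (LinearMap.range (v n)) ≤ r) ∧
      Filter.Tendsto v Filter.atTop (@nhds _ (stdTop _) u)}

section AuxRank

variable {k : Type*} [Field k]

lemma map_span_tmul {B C B₂ C₂ : Type*} [AddCommGroup B] [Module k B] [AddCommGroup C] [Module k C]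
    [AddCommGroup B₂] [Module k B₂] [AddCommGroup C₂] [Module k C₂]
    (f : B →ₗ[k] B₂) (g : C →ₗ[k] C₂) {ι : Type*} (b : ι → B) (c : ι → C) :
    Submodule.map (TensorProduct.map f g) (Submodule.span k (Set.range fun i => b i ⊗ₜ[k] c i))
      = Submodule.span k (Set.range fun i => f (b i) ⊗ₜ[k] g (c i)) := by
  rw [Submodule.map_span]
  congr 1
  rw [← Set.range_comp]
  exact congrArg _ (funext fun i => by simp)

lemma sRank_set_nonempty {B C : Type*} [AddCommGroup B] [Module k B] [AddCommGroup C] [Module k C]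
    [FiniteDimensional k B] [FiniteDimensional k C] (W : Submodule k (B ⊗[k] C)) :
    {r : ℕ | ∃ (b : Fin r → B) (c : Fin r → C),
      W ≤ Submodule.span k (Set.range fun i => b i ⊗ₜ[k] c i)}.Nonempty := by
  classical
  set bB := finBasis k B
  set bC := finBasis k C
  set e : Fin (finrank k B * finrank k C) ≃ Fin (finrank k B) × Fin (finrank k C) :=
    finProdFinEquiv.symm
  refine ⟨finrank k B * finrank k C, fun i => bB (e i).1, fun i => bC (e i).2, ?_⟩
  have hr : (Set.range fun i => bB (e i).1 ⊗ₜ[k] bC (e i).2)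
      = Set.range (bB.tensorProduct bC) := by
    have : (fun i => bB (e i).1 ⊗ₜ[k] bC (e i).2) = (bB.tensorProduct bC) ∘ e := by
      funext i; simp [Basis.tensorProduct_apply']
    rw [this, Set.range_comp, e.surjective.range_eq, Set.image_univ]
  rw [hr, (bB.tensorProduct bC).span_eq]
  exact le_top

lemma sRank_le_card {B C : Type*} [AddCommGroup B] [Module k B] [AddCommGroup C] [Module k C]
    {ι : Type*} [Fintype ι] (W : Submodule k (B ⊗[k] C))
    (b : ι → B) (c : ι → C) (h : W ≤ Submodule.span k (Set.range fun i => b i ⊗ₜ[k] c i)) :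
    sRank k W ≤ Fintype.card ι := by
  apply Nat.sInf_le
  set e := (Fintype.equivFin ι).symm
  refine ⟨b ∘ e, c ∘ e, ?_⟩
  have : (fun j => (b ∘ e) j ⊗ₜ[k] (c ∘ e) j) = (fun i => b i ⊗ₜ[k] c i) ∘ e := rfl
  rw [this, Set.range_comp, e.surjective.range_eq, Set.image_univ]
  exact h

lemma sRank_map_le {B C B₂ C₂ : Type*} [AddCommGroup B] [Module k B] [AddCommGroup C] [Module k C]
    [AddCommGroup B₂] [Module k B₂] [AddCommGroup C₂] [Module k C₂]
    [FiniteDimensional k B] [FiniteDimensional k C]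
    (f : B →ₗ[k] B₂) (g : C →ₗ[k] C₂) (W : Submodule k (B ⊗[k] C)) :
    sRank k (Submodule.map (TensorProduct.map f g) W) ≤ sRank k W := by
  obtain ⟨b, c, h⟩ := Nat.sInf_mem (sRank_set_nonempty W)
  apply Nat.sInf_le
  refine ⟨fun i => f (b i), fun i => g (c i), ?_⟩
  have h2 := Submodule.map_mono (f := TensorProduct.map f g) h
  rw [map_span_tmul f g b c] at h2
  exact h2

lemma exists_proj {B : Type*} [AddCommGroup B] [Module k B] (B' : Submodule k B) :
    ∃ p : B →ₗ[k] B', p ∘ₗ B'.subtype = LinearMap.id := by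
  obtain ⟨q, hq⟩ := Submodule.exists_isCompl B'
  exact ⟨B'.projectionOnto q hq, by ext x; simp⟩

lemma sRank_map_subtype_eq {B C : Type*} [AddCommGroup B] [Module k B] [AddCommGroup C]
    [Module k C] [FiniteDimensional k B] [FiniteDimensional k C]
    (B' : Submodule k B) (C' : Submodule k C)
    (W : Submodule k ((B' : Type _) ⊗[k] (C' : Type _))) :
    sRank k W = sRank k (Submodule.map (TensorProduct.map B'.subtype C'.subtype) W) := by
  obtain ⟨p, hp⟩ := exists_proj B'
  obtain ⟨pC, hpC⟩ := exists_proj C'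
  refine le_antisymm ?_ (sRank_map_le _ _ W)
  have key : Submodule.map (TensorProduct.map p pC)
      (Submodule.map (TensorProduct.map B'.subtype C'.subtype) W) = W := by
    rw [← Submodule.map_comp, ← TensorProduct.map_comp, hp, hpC, TensorProduct.map_id,
      Submodule.map_id]
  conv_lhs => rw [← key]
  exact sRank_map_le _ _ _

/-- The key reduction: a decomposition of `W` in the big space can be traded for a
decomposition inside `B'⊗C'` with `dim span(ρ(bᵢ))` fewer terms. -/
lemma key_reduction {B C : Type*} [AddCommGroup B] [Module k B] [FiniteDimensional k B]
    [AddCommGroup C] [Module k C] [FiniteDimensional k C]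
    (B' : Submodule k B) (C' : Submodule k C)
    (W : Submodule k ((B' : Type _) ⊗[k] (C' : Type _)))
    (p : B →ₗ[k] B') (hp : p ∘ₗ B'.subtype = LinearMap.id)
    (pC : C →ₗ[k] C') (hpC : pC ∘ₗ C'.subtype = LinearMap.id)
    {r : ℕ} (b : Fin r → B) (c : Fin r → C)
    (h : Submodule.map (TensorProduct.map B'.subtype C'.subtype) W ≤
      Submodule.span k (Set.range fun i => b i ⊗ₜ[k] c i)) :
    sRank k W + finrank k (Submodule.span k
      (Set.range fun i => b i - B'.subtype (p (b i)))) ≤ r := by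
  classical
  have hpy : ∀ y : B', p (B'.subtype y) = y := fun y => by
    rw [← LinearMap.comp_apply, hp, LinearMap.id_apply]
  set π : B →ₗ[k] B := B'.subtype ∘ₗ p with hπ
  set ρ : B →ₗ[k] B := LinearMap.id - π with hρ
  set d : Fin r → B := fun i => ρ (b i) with hd
  have hdeq : (fun i => b i - B'.subtype (p (b i))) = d := by
    funext i
    simp [hd, hρ, hπ, LinearMap.sub_apply]
  rw [hdeq]
  set U : Submodule k B := Submodule.span k (Set.range d) with hU
  set f : ℕ := finrank k U with hf
  obtain ⟨t, hts, htspan, htind⟩ := exists_linearIndependent k (Set.range d)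
  have htfin : t.Finite := (Set.finite_range d).subset hts
  haveI := htfin.fintype
  have hcardt : Fintype.card t = f := by
    rw [hf, hU, ← htspan, finrank_span_set_eq_card htind, Set.toFinset_card]
  set e : Fin f ≃ t := (Fintype.equivFinOfCardEq hcardt).symm with he
  have hchoice : ∀ x : t, ∃ i, d i = (x : B) := fun x => hts x.2
  set s : Fin f → Fin r := fun j => (hchoice (e j)).choose with hs
  have hds : ∀ j, d (s j) = ((e j) : B) := fun j => (hchoice (e j)).choose_spec
  have hsinj : Function.Injective s := by
    intro j j' hjj'
    have hvv : ((e j) : B) = ((e j') : B) := by rw [← hds, ← hds, hjj']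
    exact e.injective (Subtype.ext hvv)
  have hmem : ∀ i, d i ∈ U := fun i => Submodule.subset_span ⟨i, rfl⟩
  set w : Fin f → U := fun j => ⟨d (s j), hmem (s j)⟩ with hw
  have hwind : LinearIndependent k w := by
    apply LinearIndependent.of_comp U.subtype
    have hcw : (⇑U.subtype ∘ w) = (Subtype.val ∘ e) := funext fun j => hds j
    rw [hcw]
    exact htind.comp e e.injective
  have hwspan : ⊤ ≤ Submodule.span k (Set.range w) := by
    have h1 : Submodule.map U.subtype (Submodule.span k (Set.range w)) = U := by
      rw [Submodule.map_span]
      have h2 : (⇑U.subtype '' Set.range w) = Set.range fun j => d (s j) := by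
        rw [← Set.range_comp]; rfl
      rw [h2]
      have h3 : (Set.range fun j => d (s j)) = t := by
        have h4 : (fun j => d (s j)) = (Subtype.val ∘ e) := funext fun j => hds j
        rw [h4, Set.range_comp, Equiv.range_eq_univ, Set.image_univ, Subtype.range_val]
      rw [h3, htspan]
    have h2 : Submodule.map U.subtype (⊤ : Submodule k U) = U := Submodule.map_subtype_top U
    exact le_of_eq (Submodule.map_injective_of_injective U.injective_subtype
      (h1.trans h2.symm)).symm
  set bU : Basis (Fin f) k U := Basis.mk hwind hwspan with hbU
  set m : Fin r → Fin f → k := fun i j => bU.repr ⟨d i, hmem i⟩ j with hm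
  have hdm : ∀ i, d i = ∑ j, m i j • d (s j) := by
    intro i
    have h1 := bU.sum_repr ⟨d i, hmem i⟩
    have h3 : ((∑ j, (bU.repr ⟨d i, hmem i⟩) j • bU j : U) : B) = ∑ j, m i j • d (s j) := by
      rw [AddSubmonoidClass.coe_finset_sum]
      refine Finset.sum_congr rfl fun j _ => ?_
      rw [Submodule.coe_smul]
      congr 1
      rw [hbU, Basis.mk_apply]
    rw [← h3, h1]
  have hm2 : ∀ j₀ j, m (s j₀) j = if j₀ = j then 1 else 0 := by
    intro j₀ j
    have hx : (⟨d (s j₀), hmem (s j₀)⟩ : U) = bU j₀ := by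
      apply Subtype.ext
      rw [hbU, Basis.mk_apply]
    rw [hm]
    simp only
    rw [hx, Basis.repr_self, Finsupp.single_apply]
  obtain ⟨pU, hpU⟩ := exists_proj U
  set φ : Fin f → (B →ₗ[k] k) := fun j => (bU.coord j) ∘ₗ (pU : B →ₗ[k] U) with hφ
  have hφw : ∀ j j', φ j (d (s j')) = if j' = j then 1 else 0 := by
    intro j j'
    have h5 : pU (d (s j')) = w j' := by
      have h6 : d (s j') = U.subtype (w j') := rfl
      rw [h6, ← LinearMap.comp_apply, hpU, LinearMap.id_apply]
    rw [hφ]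
    simp only [LinearMap.comp_apply]
    rw [h5]
    have h7 : w j' = bU j' := by
      apply Subtype.ext
      rw [hbU, Basis.mk_apply]
    rw [h7, Basis.coord_apply, Basis.repr_self, Finsupp.single_apply]
  have hφd : ∀ j i, φ j (d i) = m i j := by
    intro j i
    rw [hdm i, map_sum]
    simp only [map_smul, hφw, smul_eq_mul, mul_ite, mul_one, mul_zero]
    rw [Finset.sum_ite_eq' Finset.univ j (m i)]
    simp
  set v' : Fin r → B := fun i => π (b i) - ∑ j, m i j • π (b (s j)) with hv'
  have hv's : ∀ j₀, v' (s j₀) = 0 := by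
    intro j₀
    rw [hv']
    simp only
    rw [sub_eq_zero]
    have h8 : ∀ j, m (s j₀) j • π (b (s j)) = if j₀ = j then π (b (s j)) else 0 := by
      intro j
      rw [hm2]
      split_ifs <;> simp
    rw [Finset.sum_congr rfl fun j _ => h8 j, Finset.sum_ite_eq Finset.univ j₀ fun j => π (b (s j))]
    simp
  have hrsub : ρ ∘ₗ B'.subtype = 0 := by
    ext y
    have hpy' : p (y : B) = y := hpy y
    simp [hρ, hπ, LinearMap.sub_apply, hpy']
  have hkey : Submodule.map (TensorProduct.map B'.subtype C'.subtype) W ≤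
      Submodule.span k (Set.range fun i : {i : Fin r // i ∉ Set.range s} =>
        v' i.1 ⊗ₜ[k] c i.1) := by
    intro x hx
    obtain ⟨lam, hlam⟩ := (Submodule.mem_span_range_iff_exists_fun k).1 (h hx)
    obtain ⟨x₀, hx₀W, hx₀⟩ := hx
    have hA : (TensorProduct.map ρ (LinearMap.id : C →ₗ[k] C)) x = 0 := by
      rw [← hx₀, ← LinearMap.comp_apply, ← TensorProduct.map_comp, hrsub,
        TensorProduct.map_zero_left, LinearMap.zero_apply]
    have hB : ∑ i, lam i • (d i ⊗ₜ[k] c i) = 0 := by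
      have h5 := congrArg (TensorProduct.map ρ (LinearMap.id : C →ₗ[k] C)) hlam
      rw [map_sum, hA] at h5
      simp only [LinearMap.map_smul, TensorProduct.map_tmul, LinearMap.id_apply] at h5
      exact h5
    set y : Fin f → C := fun j => ∑ i, (lam i * m i j) • c i with hy
    have hyC : ∀ j, y j = 0 := by
      intro j
      have h6 := congrArg ((TensorProduct.lid k C).toLinearMap ∘ₗ
        TensorProduct.map (φ j) (LinearMap.id : C →ₗ[k] C)) hB
      rw [map_sum, map_zero] at h6
      simp only [LinearMap.comp_apply, LinearMap.map_smul, TensorProduct.map_tmul,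
        LinearMap.id_apply, LinearEquiv.coe_coe, TensorProduct.lid_tmul, hφd, smul_smul] at h6
      exact h6
    have hπρ : TensorProduct.map π (LinearMap.id : C →ₗ[k] C) x
        + TensorProduct.map ρ (LinearMap.id : C →ₗ[k] C) x = x := by
      rw [← LinearMap.add_apply, ← TensorProduct.map_add_left]
      have h9 : π + ρ = LinearMap.id := by rw [hρ]; abel
      rw [h9, TensorProduct.map_id, LinearMap.id_apply]
    have hD : x = ∑ i, lam i • (π (b i) ⊗ₜ[k] c i) := by
      rw [← hπρ, hA, add_zero, ← hlam, map_sum]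
      simp only [LinearMap.map_smul, TensorProduct.map_tmul, LinearMap.id_apply]
    have hsplit : ∀ i, π (b i) ⊗ₜ[k] c i
        = v' i ⊗ₜ[k] c i + ∑ j, (m i j) • (π (b (s j)) ⊗ₜ[k] c i) := by
      intro i
      rw [hv']
      simp only
      rw [TensorProduct.sub_tmul, TensorProduct.sum_tmul]
      simp only [TensorProduct.smul_tmul']
      rw [sub_add_cancel]
    have h7 : ∑ i, lam i • (π (b i) ⊗ₜ[k] c i)
        = ∑ i, lam i • (v' i ⊗ₜ[k] c i)
          + ∑ i, ∑ j, (lam i * m i j) • (π (b (s j)) ⊗ₜ[k] c i) := by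
      rw [← Finset.sum_add_distrib]
      refine Finset.sum_congr rfl fun i _ => ?_
      rw [hsplit i, smul_add, Finset.smul_sum]
      congr 1
      refine Finset.sum_congr rfl fun j _ => ?_
      rw [smul_smul]
    have h8 : ∑ i, ∑ j, (lam i * m i j) • (π (b (s j)) ⊗ₜ[k] c i) = 0 := by
      rw [Finset.sum_comm]
      refine Finset.sum_eq_zero fun j _ => ?_
      have h10 : ∑ i, (lam i * m i j) • (π (b (s j)) ⊗ₜ[k] c i) = π (b (s j)) ⊗ₜ[k] y j := by
        rw [hy]
        simp only
        rw [TensorProduct.tmul_sum]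
        refine Finset.sum_congr rfl fun i _ => ?_
        rw [TensorProduct.tmul_smul]
      rw [h10, hyC j, TensorProduct.tmul_zero]
    have hE : x = ∑ i, lam i • (v' i ⊗ₜ[k] c i) := by
      rw [hD, h7, h8, add_zero]
    have hzero : ∀ i, i ∈ Set.range s → lam i • (v' i ⊗ₜ[k] c i) = 0 := by
      rintro i ⟨j₀, rfl⟩
      rw [hv's j₀, TensorProduct.zero_tmul, smul_zero]
    have hfilter : x = ∑ i ∈ Finset.univ.filter (fun i => i ∉ Set.range s),
        lam i • (v' i ⊗ₜ[k] c i) := by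
      rw [hE]
      symm
      apply Finset.sum_filter_of_ne
      intro i _ hne
      by_contra hmem'
      exact hne (hzero i hmem')
    rw [hfilter]
    apply Submodule.sum_mem
    intro i hi
    have hi' : i ∉ Set.range s := (Finset.mem_filter.1 hi).2
    exact Submodule.smul_mem _ _ (Submodule.subset_span ⟨⟨i, hi'⟩, rfl⟩)
  have hW : W ≤ Submodule.span k (Set.range fun i : {i : Fin r // i ∉ Set.range s} =>
      (p (v' i.1)) ⊗ₜ[k] (pC (c i.1))) := by
    have h9 := Submodule.map_mono (f := TensorProduct.map p pC) hkey
    rw [map_span_tmul, ← Submodule.map_comp, ← TensorProduct.map_comp, hp, hpC,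
      TensorProduct.map_id, Submodule.map_id] at h9
    exact h9
  have h10 : sRank k W ≤ Fintype.card {i : Fin r // i ∉ Set.range s} :=
    sRank_le_card W _ _ hW
  have hcard : Fintype.card {i : Fin r // i ∉ Set.range s} = r - f := by
    have hc1 : Fintype.card {i : Fin r // i ∈ Set.range s} = f := by
      have hc2 := Set.card_range_of_injective hsinj
      rw [Fintype.card_fin] at hc2
      exact (Fintype.card_congr (Equiv.refl _)).trans hc2
    rw [Fintype.card_subtype_compl, Fintype.card_fin, hc1]
  have hfr : f ≤ r := by
    have h11 := Fintype.card_le_of_injective s hsinj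
    simpa using h11
  rw [hcard] at h10
  omega

lemma span_finrank_le {B : Type*} [AddCommGroup B] [Module k B] [FiniteDimensional k B]
    (B' : Submodule k B) (p : B →ₗ[k] B') (hp : p ∘ₗ B'.subtype = LinearMap.id)
    {r : ℕ} (b : Fin r → B) :
    finrank k (Submodule.span k (Set.range b)) ≤
      finrank k (Submodule.span k (Set.range fun i => b i - B'.subtype (p (b i))))
        + finrank k B' := by
  classical
  set ρ : B →ₗ[k] B := LinearMap.id - B'.subtype ∘ₗ p with hρ
  set V : Submodule k B := Submodule.span k (Set.range b) with hV
  set g : V →ₗ[k] B := ρ ∘ₗ V.subtype with hg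
  have h1 : finrank k (LinearMap.range g) + finrank k (LinearMap.ker g) = finrank k V :=
    LinearMap.finrank_range_add_finrank_ker g
  have h2 : LinearMap.range g
      = Submodule.span k (Set.range fun i => b i - B'.subtype (p (b i))) := by
    rw [hg, LinearMap.range_comp, Submodule.range_subtype, hV, Submodule.map_span,
      ← Set.range_comp]
    exact congrArg _ (congrArg _ (funext fun i => by simp [hρ, LinearMap.sub_apply]))
  have h3 : finrank k (LinearMap.ker g) ≤ finrank k B' := by
    have h4 : Submodule.map V.subtype (LinearMap.ker g) ≤ B' := by
      rintro x ⟨y, hy, rfl⟩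
      have h5 : ρ (V.subtype y) = 0 := hy
      have h6 : V.subtype y = B'.subtype (p (V.subtype y)) := by
        have := sub_eq_zero.1 (by simpa [hρ, LinearMap.sub_apply] using h5)
        simpa using this
      rw [h6]
      exact (p (V.subtype y)).2
    calc finrank k (LinearMap.ker g)
        = finrank k (Submodule.map V.subtype (LinearMap.ker g)) :=
          (Submodule.finrank_map_subtype_eq V _).symm
      _ ≤ finrank k B' := Submodule.finrank_mono h4
  rw [h2] at h1
  omega

end AuxRank

end

section AuxTop

lemma linear_continuous_stdTop' {V M : Type*} [AddCommGroup V] [Module ℂ V]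
    [FiniteDimensional ℂ V] [AddCommGroup M] [Module ℂ M] [TopologicalSpace M]
    [IsTopologicalAddGroup M] [ContinuousSMul ℂ M] (f : V →ₗ[ℂ] M) :
    @Continuous V M (stdTop V) _ f := by
  have h1 : @Continuous V _ (stdTop V) _ ((finBasis ℂ V).equivFun : V → (Fin (finrank ℂ V) → ℂ)) :=
    continuous_induced_dom
  have h2 : Continuous (f ∘ₗ ((finBasis ℂ V).equivFun.symm.toLinearMap)) :=
    LinearMap.continuous_of_finiteDimensional _
  have he : ⇑f = ⇑(f ∘ₗ ((finBasis ℂ V).equivFun.symm.toLinearMap)) ∘ ⇑(finBasis ℂ V).equivFun := by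
    funext x
    simp only [LinearMap.coe_comp, Function.comp_apply, LinearEquiv.coe_coe,
      LinearEquiv.symm_apply_apply]
  rw [he]
  exact @Continuous.comp V (Fin (finrank ℂ V) → ℂ) M (stdTop V) _ _ _ _ h2 h1

lemma linear_continuous_stdTop {V W : Type*} [AddCommGroup V] [Module ℂ V]
    [FiniteDimensional ℂ V] [AddCommGroup W] [Module ℂ W] [FiniteDimensional ℂ W]
    (f : V →ₗ[ℂ] W) : @Continuous V W (stdTop V) (stdTop W) f := by
  have h := linear_continuous_stdTop' ((finBasis ℂ W).equivFun.toLinearMap ∘ₗ f)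
  refine continuous_induced_rng.2 ?_
  exact h

lemma eventually_injective {n : ℕ} {V : Type*} [AddCommGroup V] [Module ℂ V]
    [FiniteDimensional ℂ V] (q : V →ₗ[ℂ] (Fin n → ℂ))
    {u : (Fin n → ℂ) →ₗ[ℂ] V} {v : ℕ → ((Fin n → ℂ) →ₗ[ℂ] V)}
    (hq : q ∘ₗ u = LinearMap.id)
    (hv : Filter.Tendsto v Filter.atTop (@nhds _ (stdTop _) u)) :
    ∃ N, ∀ m ≥ N, Function.Injective ⇑(q ∘ₗ v m) := by
  classical
  set bb := Pi.basisFun ℂ (Fin n) with hbb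
  set F : ((Fin n → ℂ) →ₗ[ℂ] V) → ℂ := fun L => LinearMap.det (q ∘ₗ L) with hF
  have hFcont : @Continuous _ _ (stdTop ((Fin n → ℂ) →ₗ[ℂ] V)) _ F := by
    have hdet : Continuous fun A : Matrix (Fin n) (Fin n) ℂ => A.det :=
      Continuous.matrix_det continuous_id
    have hlin := linear_continuous_stdTop'
      ((LinearMap.toMatrix bb bb).toLinearMap ∘ₗ LinearMap.llcomp (σ₁₂ := RingHom.id ℂ) (σ₁₃ := RingHom.id ℂ) ℂ (Fin n → ℂ) V (Fin n → ℂ) q)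
    have he : F = (fun A : Matrix (Fin n) (Fin n) ℂ => A.det) ∘
        ⇑((LinearMap.toMatrix bb bb).toLinearMap ∘ₗ
          LinearMap.llcomp ℂ (Fin n → ℂ) V (Fin n → ℂ) q) := by
      funext L
      simp only [hF, Function.comp_apply, LinearMap.coe_comp, LinearEquiv.coe_coe,
        LinearMap.llcomp_apply']
      rw [LinearMap.det_toMatrix]
    rw [he]
    exact @Continuous.comp _ (Matrix (Fin n) (Fin n) ℂ) ℂ
      (stdTop ((Fin n → ℂ) →ₗ[ℂ] V)) _ _ _ _ hdet hlin
  have h1 : F u = 1 := by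
    simp only [hF, hq, LinearMap.det_id]
  have htd : Filter.Tendsto (F ∘ v) Filter.atTop (nhds (1 : ℂ)) := by
    have := (@Continuous.tendsto _ _ (stdTop ((Fin n → ℂ) →ₗ[ℂ] V)) _ F hFcont u).comp hv
    rwa [h1] at this
  obtain ⟨N, hN⟩ := Filter.eventually_atTop.1 (htd.eventually_ne one_ne_zero)
  refine ⟨N, fun m hm => ?_⟩
  have hdet : LinearMap.det (q ∘ₗ v m) ≠ 0 := hN m hm
  have hcoe : ⇑(LinearMap.equivOfDetNeZero (q ∘ₗ v m) hdet) = ⇑(q ∘ₗ v m) := rfl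
  rw [← hcoe]
  exact (LinearMap.equivOfDetNeZero (q ∘ₗ v m) hdet).injective

end AuxTop

/-- Auxiliary predicate: `W` admits an `n`-frame limit of subspaces of rank at most `r`. -/
def BFrame (n : ℕ) {B C : Type*} [AddCommGroup B] [Module ℂ B] [FiniteDimensional ℂ B]
    [AddCommGroup C] [Module ℂ C] [FiniteDimensional ℂ C]
    (W : Submodule ℂ (B ⊗[ℂ] C)) (r : ℕ) : Prop :=
  ∃ u : (Fin n → ℂ) →ₗ[ℂ] (B ⊗[ℂ] C),
    Function.Injective u ∧ LinearMap.range u = W ∧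
    ∃ v : ℕ → ((Fin n → ℂ) →ₗ[ℂ] (B ⊗[ℂ] C)),
      (∀ m, Function.Injective (v m) ∧ sRank ℂ (LinearMap.range (v m)) ≤ r) ∧
      Filter.Tendsto v Filter.atTop (@nhds _ (stdTop _) u)

lemma sBRank_eq_sInf {B C : Type*} [AddCommGroup B] [Module ℂ B] [FiniteDimensional ℂ B]
    [AddCommGroup C] [Module ℂ C] [FiniteDimensional ℂ C] (W : Submodule ℂ (B ⊗[ℂ] C)) :
    sBRank W = sInf {r | BFrame (finrank ℂ W) W r} := rfl

/-- For subspaces `B' ⊆ B`, `C' ⊆ C` and `W ⊆ B'⊗C'`: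
(1) the rank of `W` computed in `B'⊗C'` equals the rank of its image in `B⊗C`;
(2) any decomposition `W ⊆ span(b_i⊗c_i : i = 1, …, r)` inside `B⊗C` satisfies
`r ≥ R(W) + dim span(b_1, …, b_r) − dim B'` (stated additively); and
(3) over `ℂ`, the border rank of `W` computed in `B'⊗C'` equals the border rank of its
image in `B⊗C`. -/
theorem subspace_rank_independent_of_ambient_space
    (k : Type*) [Field k] (B C : Type*) [AddCommGroup B] [Module k B] [FiniteDimensional k B]
    [AddCommGroup C] [Module k C] [FiniteDimensional k C]
    (B' : Submodule k B) (C' : Submodule k C)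
    (W : Submodule k ((B' : Type _) ⊗[k] (C' : Type _))) :
    (sRank k W = sRank k (Submodule.map (TensorProduct.map B'.subtype C'.subtype) W)) ∧
    (∀ (r : ℕ) (b : Fin r → B) (c : Fin r → C),
      Submodule.map (TensorProduct.map B'.subtype C'.subtype) W ≤
        Submodule.span k (Set.range fun i => b i ⊗ₜ[k] c i) →
      sRank k W + finrank k (Submodule.span k (Set.range b)) ≤ r + finrank k B') ∧
    (∀ (B₀ C₀ : Type) [AddCommGroup B₀] [Module ℂ B₀] [FiniteDimensional ℂ B₀]
      [AddCommGroup C₀] [Module ℂ C₀] [FiniteDimensional ℂ C₀]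
      (B₀' : Submodule ℂ B₀) (C₀' : Submodule ℂ C₀)
      (W₀ : Submodule ℂ ((B₀' : Type) ⊗[ℂ] (C₀' : Type))),
      sBRank W₀ = sBRank (Submodule.map (TensorProduct.map B₀'.subtype C₀'.subtype) W₀)) := by
  refine ⟨sRank_map_subtype_eq B' C' W, ?_, ?_⟩
  · intro r b c h
    obtain ⟨p, hp⟩ := exists_proj B'
    obtain ⟨pC, hpC⟩ := exists_proj C'
    have k1 := key_reduction B' C' W p hp pC hpC b c h
    have k2 := span_finrank_le B' p hp b
    omega
  · intro B₀ C₀ _ _ _ _ _ _ B₀' C₀' W₀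
    obtain ⟨p, hp⟩ := exists_proj B₀'
    obtain ⟨pC, hpC⟩ := exists_proj C₀'
    set ι : (↥B₀' ⊗[ℂ] ↥C₀') →ₗ[ℂ] (B₀ ⊗[ℂ] C₀) :=
      TensorProduct.map B₀'.subtype C₀'.subtype with hι
    set π : (B₀ ⊗[ℂ] C₀) →ₗ[ℂ] (↥B₀' ⊗[ℂ] ↥C₀') := TensorProduct.map p pC with hπ
    have hπι : π ∘ₗ ι = LinearMap.id := by
      rw [hπ, hι, ← TensorProduct.map_comp, hp, hpC, TensorProduct.map_id]
    have hπιa : ∀ z, π (ι z) = z := fun z => by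
      rw [← LinearMap.comp_apply, hπι, LinearMap.id_apply]
    have hιinj : Function.Injective ι := fun a b hab => by
      have h0 := congrArg π hab
      rwa [hπιa, hπιa] at h0
    have hfr : finrank ℂ W₀ = finrank ℂ (Submodule.map ι W₀) :=
      (Submodule.equivMapOfInjective ι hιinj W₀).finrank_eq
    rw [sBRank_eq_sInf, sBRank_eq_sInf]
    congr 1
    ext r
    simp only [Set.mem_setOf_eq]
    rw [← hfr]
    unfold BFrame
    constructor
    · rintro ⟨u, huinj, hurange, v, hv, htend⟩
      refine ⟨ι ∘ₗ u, hιinj.comp huinj, ?_, fun n => ι ∘ₗ v n, fun n => ⟨?_, ?_⟩, ?_⟩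
      · rw [LinearMap.range_comp, hurange]
      · exact hιinj.comp (hv n).1
      · rw [LinearMap.range_comp]
        exact le_trans (sRank_map_le B₀'.subtype C₀'.subtype _) (hv n).2
      · have hcont := linear_continuous_stdTop
          (V := (Fin (finrank ℂ W₀) → ℂ) →ₗ[ℂ] (↥B₀' ⊗[ℂ] ↥C₀'))
          (W := (Fin (finrank ℂ W₀) → ℂ) →ₗ[ℂ] (B₀ ⊗[ℂ] C₀))
          (LinearMap.llcomp ℂ (Fin (finrank ℂ W₀) → ℂ) (↥B₀' ⊗[ℂ] ↥C₀') (B₀ ⊗[ℂ] C₀) ι)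
        exact (@Continuous.tendsto _ _ (stdTop _) (stdTop _) _ hcont u).comp htend
    · rintro ⟨u, huinj, hurange, v, hv, htend⟩
      have hue : ∀ x, ι (π (u x)) = u x := by
        intro x
        have hx : u x ∈ Submodule.map ι W₀ := hurange ▸ LinearMap.mem_range_self u x
        obtain ⟨w0, _, hw0⟩ := hx
        rw [← hw0, hπιa]
      have huπinj : Function.Injective ⇑(π ∘ₗ u) := by
        intro a b hab
        apply huinj
        simp only [LinearMap.coe_comp, Function.comp_apply] at hab
        rw [← hue a, ← hue b, hab]
      have hrange' : LinearMap.range (π ∘ₗ u) = W₀ := by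
        rw [LinearMap.range_comp, hurange, ← Submodule.map_comp, hπι, Submodule.map_id]
      obtain ⟨g, hg⟩ := (π ∘ₗ u).exists_leftInverse_of_injective (LinearMap.ker_eq_bot.2 huπinj)
      obtain ⟨N, hN⟩ := eventually_injective (g ∘ₗ π) (by rw [LinearMap.comp_assoc, hg]) htend
      refine ⟨π ∘ₗ u, huπinj, hrange', fun n => π ∘ₗ v (n + N), fun n => ⟨?_, ?_⟩, ?_⟩
      · have h1 := hN (n + N) (Nat.le_add_left N n)
        rw [LinearMap.comp_assoc, LinearMap.coe_comp] at h1
        exact h1.of_comp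
      · rw [LinearMap.range_comp]
        exact le_trans (sRank_map_le p pC _) (hv (n + N)).2
      · have hvN : Filter.Tendsto (fun n => v (n + N)) Filter.atTop (@nhds _ (stdTop _) u) :=
          htend.comp (Filter.tendsto_add_atTop_nat N)
        have hcont := linear_continuous_stdTop
          (V := (Fin (finrank ℂ W₀) → ℂ) →ₗ[ℂ] (B₀ ⊗[ℂ] C₀))
          (W := (Fin (finrank ℂ W₀) → ℂ) →ₗ[ℂ] (↥B₀' ⊗[ℂ] ↥C₀'))
          (LinearMap.llcomp ℂ (Fin (finrank ℂ W₀) → ℂ) (B₀ ⊗[ℂ] C₀) (↥B₀' ⊗[ℂ] ↥C₀') π)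
        exact (@Continuous.tendsto _ _ (stdTop _) (stdTop _) _ hcont u).comp hvN
end
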